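/- Let F(θ) = (1/n)Σ_{j=1}^n F_j(θ) with each ∇F_j L-Lipschitz, and sample a mini-batch J of size b < n uniformly without replacement. With G_J(θ̂) := (1/b)Σ_{j∈J} R∇F_j(θ̃) + R∇F(θ^(k)) − (1/b)Σ_{j∈J} R∇F_j(θ^(k)) and θ̃ := θ^(k) + P(θ̂ − Rθ^(k)), the estimator is unbiased, E_J[G_J(θ̂)] = R∇F(θ̃), and its variance satisfies E_J[‖G_J(θ̂) − R∇F(θ̃)‖²] ≤ (L²(n−b)/(b(n−1)))‖θ̂ − Rθ^(k)‖². -/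

import Mathlib

open RealInnerProductSpace Finset

/-!
With `X j := R ∇F_j(θ̃) - R ∇F_j(θ^(k))`, the estimator is `G_J = X̄_J + R ∇F(θ^(k))`, where
`X̄_J` is the mean of `X` over the batch `J`, while `R ∇F(θ̃) = X̄ + R ∇F(θ^(k))` with `X̄` the mean
over all indices. So both claims concern the mean of a uniformly random `b`-subset of a finite
population: each index lies in `b C(n,b) / n` of the batches and each pair of distinct indices in
`b (b-1) C(n,b) / (n (n-1))`, which gives unbiasedness and the finite-population correction
`E ‖X̄_J - X̄‖² = (n-b) / (b (n-1)) · (1/n) Σ ‖X_j - X̄‖²`. The population variance is at most the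
second moment, and `‖X_j‖ ≤ L ‖θ̃ - θ^(k)‖ = L ‖P (θ̂ - R θ^(k))‖ = L ‖θ̂ - R θ^(k)‖`, since `R`
restricts coordinates and `P = Rᵀ` is an isometry (`R P = 1`).
-/

section Coordinates

variable {κ κ' : Type*} (ι : κ → κ')

def restrictCoords : EuclideanSpace ℝ κ' →ₗ[ℝ] EuclideanSpace ℝ κ where
  toFun x := WithLp.toLp 2 fun i => x (ι i)
  map_add' _ _ := rfl
  map_smul' _ _ := rfl

@[simp]
theorem restrictCoords_apply (x : EuclideanSpace ℝ κ') (i : κ) : restrictCoords ι x i = x (ι i) :=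
  rfl

variable [Fintype κ] [DecidableEq κ']

def extendByZero (x : EuclideanSpace ℝ κ) : EuclideanSpace ℝ κ' :=
  WithLp.toLp 2 fun j => ∑ i, if ι i = j then x i else 0

@[simp]
theorem extendByZero_apply (x : EuclideanSpace ℝ κ) (j : κ') :
    extendByZero ι x j = ∑ i, if ι i = j then x i else 0 :=
  rfl

variable {ι}

theorem restrictCoords_extendByZero (hι : Function.Injective ι) (x : EuclideanSpace ℝ κ) :
    restrictCoords ι (extendByZero ι x) = x := by
  ext i
  classical
  simp [hι.eq_iff]

variable [Fintype κ']

theorem inner_extendByZero (x : EuclideanSpace ℝ κ) (y : EuclideanSpace ℝ κ') :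
    ⟪extendByZero ι x, y⟫ = ⟪x, restrictCoords ι y⟫ := by
  simp only [PiLp.inner_apply, extendByZero_apply, restrictCoords_apply, sum_inner]
  rw [sum_comm]
  simp

theorem norm_extendByZero (hι : Function.Injective ι) (x : EuclideanSpace ℝ κ) :
    ‖extendByZero ι x‖ = ‖x‖ := by
  have h : ‖extendByZero ι x‖ ^ 2 = ‖x‖ ^ 2 := by
    rw [← real_inner_self_eq_norm_sq, inner_extendByZero, restrictCoords_extendByZero hι,
      real_inner_self_eq_norm_sq]
  exact (sq_eq_sq₀ (norm_nonneg _) (norm_nonneg _)).1 h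

theorem norm_restrictCoords_le (hι : Function.Injective ι) (y : EuclideanSpace ℝ κ') :
    ‖restrictCoords ι y‖ ≤ ‖y‖ := by
  have h : ‖restrictCoords ι y‖ ^ 2 ≤ ‖restrictCoords ι y‖ * ‖y‖ := by
    calc ‖restrictCoords ι y‖ ^ 2 = ⟪extendByZero ι (restrictCoords ι y), y⟫ := by
          rw [inner_extendByZero, real_inner_self_eq_norm_sq]
      _ ≤ ‖extendByZero ι (restrictCoords ι y)‖ * ‖y‖ := real_inner_le_norm _ _
      _ = ‖restrictCoords ι y‖ * ‖y‖ := by rw [norm_extendByZero hι]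
  nlinarith [norm_nonneg (restrictCoords ι y), norm_nonneg y]

end Coordinates

section Variance

variable {α E : Type*} [Fintype α] [NormedAddCommGroup E] [InnerProductSpace ℝ E]

theorem sum_norm_sub_mean_sq_le (X : α → E) :
    ∑ i, ‖X i - (Fintype.card α : ℝ)⁻¹ • ∑ j, X j‖ ^ 2 ≤ ∑ i, ‖X i‖ ^ 2 := by
  set μ := (Fintype.card α : ℝ)⁻¹ • ∑ j, X j
  have hsum : ∑ j, X j = (Fintype.card α : ℝ) • μ := by
    rcases isEmpty_or_nonempty α with hα | hα
    · simp
    · rw [smul_inv_smul₀ (by positivity)]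
  have h : ∑ i, ‖X i - μ‖ ^ 2 = ∑ i, ‖X i‖ ^ 2 - Fintype.card α * ‖μ‖ ^ 2 := by
    simp only [norm_sub_sq_real, sum_add_distrib, sum_sub_distrib, ← mul_sum, ← sum_inner, hsum,
      real_inner_smul_left, real_inner_self_eq_norm_sq, sum_const, card_univ, nsmul_eq_mul]
    ring
  rw [h]
  have : 0 ≤ (Fintype.card α : ℝ) * ‖μ‖ ^ 2 := by positivity
  linarith

end Variance

section DoubleCounting

variable {α M : Type*} [Fintype α] [DecidableEq α] [AddCommMonoid M]

theorem sum_sum_mem_eq_sum_card_filter_nsmul (N : Finset (Finset α)) (f : α → M) :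
    ∑ u ∈ N, ∑ j ∈ u, f j = ∑ j, #{u ∈ N | j ∈ u} • f j := by
  rw [sum_comm' (t' := univ) (s' := fun j => {u ∈ N | j ∈ u}) (by simp)]
  simp only [sum_const]

theorem sum_sum_sum_mem_eq_sum_sum_card_filter_nsmul (N : Finset (Finset α)) (f : α → α → M) :
    ∑ u ∈ N, ∑ i ∈ u, ∑ j ∈ u, f i j = ∑ i, ∑ j, #{u ∈ N | i ∈ u ∧ j ∈ u} • f i j := by
  rw [sum_comm' (t' := univ) (s' := fun i => {u ∈ N | i ∈ u}) (by simp)]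
  simp only [sum_sum_mem_eq_sum_card_filter_nsmul, filter_filter]

end DoubleCounting

theorem card_filter_powersetCard_subset_mul_choose {α : Type*} [DecidableEq α] {s t : Finset α}
    (hst : s ⊆ t) (n : ℕ) :
    #{u ∈ t.powersetCard n | s ⊆ u} * (#t).choose #s = (#t).choose n * n.choose #s := by
  by_cases hsn : #s ≤ n
  · rw [card_filter_powersetCard_subset s t n hst hsn, Nat.choose_mul hsn]
    ring
  · rw [Nat.choose_eq_zero_of_lt (not_le.1 hsn), mul_zero, mul_eq_zero, card_eq_zero,
      filter_eq_empty_iff]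
    left
    intro u hu hsu
    have := card_le_card hsu
    rw [(mem_powersetCard.1 hu).2] at this
    omega

section Sampling

variable {α : Type*} [Fintype α] [DecidableEq α]

theorem card_filter_powersetCard_univ_mem_mul (b : ℕ) (j : α) :
    Fintype.card α * #{u ∈ powersetCard b univ | j ∈ u} = (Fintype.card α).choose b * b := by
  rw [mul_comm]
  simpa [singleton_subset_iff] using
    card_filter_powersetCard_subset_mul_choose (subset_univ {j}) b

theorem card_filter_powersetCard_univ_mem_mem_mul {i j : α} (hij : i ≠ j) (b : ℕ) :
    #{u ∈ powersetCard b univ | i ∈ u ∧ j ∈ u} * (Fintype.card α).choose 2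
      = (Fintype.card α).choose b * b.choose 2 := by
  simpa [insert_subset_iff, card_pair hij] using
    card_filter_powersetCard_subset_mul_choose (subset_univ {i, j}) b

theorem card_nsmul_sum_powersetCard_sum {M : Type*} [AddCommMonoid M] (b : ℕ) (X : α → M) :
    Fintype.card α • ∑ u ∈ powersetCard b univ, ∑ j ∈ u, X j
      = ((Fintype.card α).choose b * b) • ∑ j, X j := by
  simp only [sum_sum_mem_eq_sum_card_filter_nsmul, smul_sum, smul_smul,
    card_filter_powersetCard_univ_mem_mul]

theorem average_minibatch_mean {M : Type*} [AddCommGroup M] [Module ℝ M] {b : ℕ} (hb : 0 < b)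
    (hbn : b ≤ Fintype.card α) (X : α → M) :
    ((Fintype.card α).choose b : ℝ)⁻¹ • ∑ u ∈ powersetCard b univ, (b : ℝ)⁻¹ • ∑ j ∈ u, X j
      = (Fintype.card α : ℝ)⁻¹ • ∑ j, X j := by
  have hn : (Fintype.card α : ℝ) ≠ 0 := by norm_cast; omega
  have hC : ((Fintype.card α).choose b : ℝ) ≠ 0 := by exact_mod_cast (Nat.choose_pos hbn).ne'
  have h : (Fintype.card α : ℝ) • ∑ u ∈ powersetCard b univ, ∑ j ∈ u, X j
      = ((Fintype.card α).choose b * b : ℝ) • ∑ j, X j := by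
    simpa only [← Nat.cast_smul_eq_nsmul ℝ, Nat.cast_mul] using card_nsmul_sum_powersetCard_sum b X
  rw [← smul_sum, smul_smul, ← inv_smul_smul₀ hn (∑ u ∈ _, _), h, smul_smul, smul_smul]
  congr 1
  field_simp

variable {E : Type*} [NormedAddCommGroup E] [InnerProductSpace ℝ E]

theorem cast_card_filter_powersetCard_univ_mem_mem_mul (b : ℕ) (i j : α) :
    (Fintype.card α : ℝ) * (Fintype.card α - 1) * #{u ∈ powersetCard b univ | i ∈ u ∧ j ∈ u}
      = ((Fintype.card α).choose b : ℝ) * b * (b - 1)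
        + if i = j then ((Fintype.card α).choose b : ℝ) * b * (Fintype.card α - b) else 0 := by
  rcases eq_or_ne i j with rfl | hij
  · have h : (Fintype.card α * #{u ∈ powersetCard b univ | i ∈ u} : ℝ)
        = (Fintype.card α).choose b * b := by
      exact_mod_cast card_filter_powersetCard_univ_mem_mul b i
    simp only [and_self, if_true]
    linear_combination ((Fintype.card α : ℝ) - 1) * h
  · have h : (#{u ∈ powersetCard b univ | i ∈ u ∧ j ∈ u} * (Fintype.card α).choose 2 : ℝ)
        = (Fintype.card α).choose b * b.choose 2 := by
      exact_mod_cast card_filter_powersetCard_univ_mem_mem_mul hij b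
    simp only [Nat.cast_choose_two] at h
    rw [if_neg hij]
    linear_combination 2 * h

theorem mul_sum_powersetCard_norm_sum_sq (b : ℕ) (Y : α → E) :
    (Fintype.card α : ℝ) * (Fintype.card α - 1) * ∑ u ∈ powersetCard b univ, ‖∑ j ∈ u, Y j‖ ^ 2
      = ((Fintype.card α).choose b : ℝ) * b * (b - 1) * ‖∑ j, Y j‖ ^ 2
        + ((Fintype.card α).choose b : ℝ) * b * (Fintype.card α - b) * ∑ j, ‖Y j‖ ^ 2 := by
  have hexpand (u : Finset α) : ‖∑ j ∈ u, Y j‖ ^ 2 = ∑ i ∈ u, ∑ j ∈ u, ⟪Y i, Y j⟫ := by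
    simp only [← real_inner_self_eq_norm_sq, sum_inner, inner_sum]
    exact sum_comm
  simp only [hexpand, sum_sum_sum_mem_eq_sum_sum_card_filter_nsmul, nsmul_eq_mul, mul_sum,
    ← mul_assoc, cast_card_filter_powersetCard_univ_mem_mem_mul, add_mul, ite_mul, zero_mul,
    sum_add_distrib, sum_ite_eq, mem_univ, if_true, real_inner_self_eq_norm_sq]

theorem average_sq_dist_minibatch_mean {b : ℕ} (hb : 0 < b) (hbn : b ≤ Fintype.card α)
    (hn : 1 < Fintype.card α) (X : α → E) :
    ((Fintype.card α).choose b : ℝ)⁻¹ * ∑ u ∈ powersetCard b univ,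
        ‖(b : ℝ)⁻¹ • ∑ j ∈ u, X j - (Fintype.card α : ℝ)⁻¹ • ∑ j, X j‖ ^ 2
      = (Fintype.card α - b) / (b * (Fintype.card α - 1)) *
          ((Fintype.card α : ℝ)⁻¹ * ∑ i, ‖X i - (Fintype.card α : ℝ)⁻¹ • ∑ j, X j‖ ^ 2) := by
  set n := Fintype.card α
  set μ := (n : ℝ)⁻¹ • ∑ j, X j
  have hn0 : (n : ℝ) ≠ 0 := by norm_cast; omega
  have hn1 : (n : ℝ) - 1 ≠ 0 := by
    have : (1 : ℝ) < n := by exact_mod_cast hn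
    linarith
  have hb0 : (b : ℝ) ≠ 0 := by exact_mod_cast hb.ne'
  have hC : (n.choose b : ℝ) ≠ 0 := by exact_mod_cast (Nat.choose_pos hbn).ne'
  have hcentered : ∑ j, (X j - μ) = 0 := by
    rw [sum_sub_distrib, sum_const, card_univ, ← Nat.cast_smul_eq_nsmul ℝ, smul_inv_smul₀ hn0,
      sub_self]
  have hbatch : ∀ u ∈ powersetCard b univ,
      (b : ℝ)⁻¹ • ∑ j ∈ u, X j - μ = (b : ℝ)⁻¹ • ∑ j ∈ u, (X j - μ) := by
    intro u hu
    rw [sum_sub_distrib, sum_const, (mem_powersetCard.1 hu).2, ← Nat.cast_smul_eq_nsmul ℝ,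
      smul_sub, inv_smul_smul₀ hb0]
  have h := mul_sum_powersetCard_norm_sum_sq b (fun j => X j - μ)
  rw [hcentered, norm_zero] at h
  rw [sum_congr rfl fun u hu => by rw [hbatch u hu, norm_smul, mul_pow], ← mul_sum, norm_inv,
    RCLike.norm_natCast]
  field_simp
  linear_combination h

theorem average_sq_dist_minibatch_mean_le {b : ℕ} (hb : 0 < b) (hbn : b ≤ Fintype.card α)
    (hn : 1 < Fintype.card α) {X : α → E} {M : ℝ} (hX : ∀ j, ‖X j‖ ≤ M) :
    ((Fintype.card α).choose b : ℝ)⁻¹ * ∑ u ∈ powersetCard b univ,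
        ‖(b : ℝ)⁻¹ • ∑ j ∈ u, X j - (Fintype.card α : ℝ)⁻¹ • ∑ j, X j‖ ^ 2
      ≤ (Fintype.card α - b) / (b * (Fintype.card α - 1)) * M ^ 2 := by
  have hn0 : (0 : ℝ) < Fintype.card α := by exact_mod_cast hb.trans_le hbn
  have hcoeff : (0 : ℝ) ≤ (Fintype.card α - b) / (b * (Fintype.card α - 1)) := by
    have hbn : (b : ℝ) ≤ Fintype.card α := by exact_mod_cast hbn
    have hn : (1 : ℝ) < Fintype.card α := by exact_mod_cast hn
    exact div_nonneg (by linarith) (by positivity)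
  rw [average_sq_dist_minibatch_mean hb hbn hn]
  refine mul_le_mul_of_nonneg_left ?_ hcoeff
  calc (Fintype.card α : ℝ)⁻¹ * ∑ i, ‖X i - (Fintype.card α : ℝ)⁻¹ • ∑ j, X j‖ ^ 2
      ≤ (Fintype.card α : ℝ)⁻¹ * ∑ i, ‖X i‖ ^ 2 :=
        mul_le_mul_of_nonneg_left (sum_norm_sub_mean_sq_le X) (by positivity)
    _ ≤ (Fintype.card α : ℝ)⁻¹ * (Fintype.card α * M ^ 2) := by
        gcongr
        simpa using sum_le_card_nsmul univ _ _ fun j _ => pow_le_pow_left₀ (norm_nonneg _) (hX j) 2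
    _ = M ^ 2 := by field_simp

end Sampling

theorem variance_reduced_coarse_gradient_minibatch_general {d D n b : ℕ}
    (hb : 0 < b) (hbn : b < n)
    (L : ℝ)
    (gF : Fin n → EuclideanSpace ℝ (Fin d) → EuclideanSpace ℝ (Fin d))
    (hlip : ∀ j x y, ‖gF j x - gF j y‖ ≤ L * ‖x - y‖)
    (ι : Fin D → Fin d) (hι : Function.Injective ι)
    (θk : EuclideanSpace ℝ (Fin d)) (θc : EuclideanSpace ℝ (Fin D)) :
    let Rop : EuclideanSpace ℝ (Fin d) → EuclideanSpace ℝ (Fin D) := fun x => WithLp.toLp 2 (fun i => x (ι i))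
    let Pop : EuclideanSpace ℝ (Fin D) → EuclideanSpace ℝ (Fin d) :=
      fun x => WithLp.toLp 2 (fun j => ∑ i, if ι i = j then x i else 0)
    let gradF : EuclideanSpace ℝ (Fin d) → EuclideanSpace ℝ (Fin d) :=
      fun x => (n : ℝ)⁻¹ • ∑ j, gF j x
    let θt := θk + Pop (θc - Rop θk)
    let GJ : Finset (Fin n) → EuclideanSpace ℝ (Fin D) :=
      fun Jb => ((b : ℝ)⁻¹ • ∑ j ∈ Jb, Rop (gF j θt)) + Rop (gradF θk)
        - (b : ℝ)⁻¹ • ∑ j ∈ Jb, Rop (gF j θk)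
    ((n.choose b : ℝ)⁻¹ • ∑ Jb ∈ Finset.univ.powersetCard b, GJ Jb = Rop (gradF θt)) ∧
      (n.choose b : ℝ)⁻¹ * ∑ Jb ∈ Finset.univ.powersetCard b, ‖GJ Jb - Rop (gradF θt)‖^2
        ≤ L^2 * ((n : ℝ) - b) / (b * ((n : ℝ) - 1)) * ‖θc - Rop θk‖^2 := by
  intro Rop Pop gradF θt GJ
  have hR : Rop = restrictCoords ι := rfl
  set X : Fin n → EuclideanSpace ℝ (Fin D) := fun j => Rop (gF j θt) - Rop (gF j θk)
  have hGJ (u : Finset (Fin n)) : GJ u = (b : ℝ)⁻¹ • ∑ j ∈ u, X j + Rop (gradF θk) := by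
    simp only [GJ, X, sum_sub_distrib, smul_sub]
    abel
  have hgradF : Rop (gradF θt) = (n : ℝ)⁻¹ • ∑ j, X j + Rop (gradF θk) := by
    simp only [gradF, X, hR, map_smul, map_sum, sum_sub_distrib, smul_sub, sub_add_cancel]
  have hX (j : Fin n) : ‖X j‖ ≤ L * ‖θc - Rop θk‖ := calc
    ‖X j‖ = ‖Rop (gF j θt - gF j θk)‖ := by rw [hR, map_sub]; rfl
    _ ≤ ‖gF j θt - gF j θk‖ := norm_restrictCoords_le hι _
    _ ≤ L * ‖θt - θk‖ := hlip j θt θk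
    _ = L * ‖θc - Rop θk‖ := by rw [add_sub_cancel_left, ← norm_extendByZero hι]; rfl
  have hbn' : b ≤ Fintype.card (Fin n) := by rw [Fintype.card_fin]; exact hbn.le
  refine ⟨?_, ?_⟩
  · have hmean := average_minibatch_mean hb hbn' X
    have hC : (n.choose b : ℝ) ≠ 0 := by exact_mod_cast (Nat.choose_pos hbn.le).ne'
    rw [Fintype.card_fin] at hmean
    rw [sum_congr rfl fun u _ => hGJ u, sum_add_distrib, smul_add, hmean, sum_const,
      card_powersetCard, card_univ, Fintype.card_fin, ← Nat.cast_smul_eq_nsmul ℝ,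
      inv_smul_smul₀ hC, hgradF]
  · have hvar := average_sq_dist_minibatch_mean_le hb hbn' (by rw [Fintype.card_fin]; omega) hX
    rw [Fintype.card_fin] at hvar
    calc (n.choose b : ℝ)⁻¹ * ∑ u ∈ univ.powersetCard b, ‖GJ u - Rop (gradF θt)‖ ^ 2
        = (n.choose b : ℝ)⁻¹ * ∑ u ∈ univ.powersetCard b,
            ‖(b : ℝ)⁻¹ • ∑ j ∈ u, X j - (n : ℝ)⁻¹ • ∑ j, X j‖ ^ 2 := by
          simp only [hGJ, hgradF, add_sub_add_right_eq_sub]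
      _ ≤ ((n : ℝ) - b) / (b * ((n : ℝ) - 1)) * (L * ‖θc - Rop θk‖) ^ 2 := hvar
      _ = L ^ 2 * ((n : ℝ) - b) / (b * ((n : ℝ) - 1)) * ‖θc - Rop θk‖ ^ 2 := by ring

/-- for a mini-batch `Jb` of size `b < n` sampled uniformly without
replacement, the variance-reduced coarse gradient
`G_J(θ̂) := (1/b)Σ_{j∈J} R∇F_j(θ̃) + R∇F(θ^(k)) - (1/b)Σ_{j∈J} R∇F_j(θ^(k))` is unbiased,
`E_J[G_J(θ̂)] = R∇F(θ̃)`, with variance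
`E_J[‖G_J(θ̂) - R∇F(θ̃)‖²] ≤ (L²(n-b)/(b(n-1)))‖θ̂ - Rθ^(k)‖²`. -/
theorem variance_reduced_coarse_gradient_minibatch {d D n b : ℕ}
    (hb : 0 < b) (hbn : b < n)
    (L : ℝ) (hL : 0 ≤ L)
    (F : Fin n → EuclideanSpace ℝ (Fin d) → ℝ)
    (gF : Fin n → EuclideanSpace ℝ (Fin d) → EuclideanSpace ℝ (Fin d))
    (hgrad : ∀ j x, HasGradientAt (F j) (gF j x) x)
    (hlip : ∀ j x y, ‖gF j x - gF j y‖ ≤ L * ‖x - y‖)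
    (ι : Fin D → Fin d) (hι : Function.Injective ι)
    (θk : EuclideanSpace ℝ (Fin d)) (θc : EuclideanSpace ℝ (Fin D)) :
    let Rop : EuclideanSpace ℝ (Fin d) → EuclideanSpace ℝ (Fin D) := fun x => WithLp.toLp 2 (fun i => x (ι i))
    let Pop : EuclideanSpace ℝ (Fin D) → EuclideanSpace ℝ (Fin d) :=
      fun x => WithLp.toLp 2 (fun j => ∑ i, if ι i = j then x i else 0)
    let gradF : EuclideanSpace ℝ (Fin d) → EuclideanSpace ℝ (Fin d) :=
      fun x => (n : ℝ)⁻¹ • ∑ j, gF j x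
    let θt := θk + Pop (θc - Rop θk)
    let GJ : Finset (Fin n) → EuclideanSpace ℝ (Fin D) :=
      fun Jb => ((b : ℝ)⁻¹ • ∑ j ∈ Jb, Rop (gF j θt)) + Rop (gradF θk)
        - (b : ℝ)⁻¹ • ∑ j ∈ Jb, Rop (gF j θk)
    ((n.choose b : ℝ)⁻¹ • ∑ Jb ∈ Finset.univ.powersetCard b, GJ Jb = Rop (gradF θt)) ∧
      (n.choose b : ℝ)⁻¹ * ∑ Jb ∈ Finset.univ.powersetCard b, ‖GJ Jb - Rop (gradF θt)‖^2
        ≤ L^2 * ((n : ℝ) - b) / (b * ((n : ℝ) - 1)) * ‖θc - Rop θk‖^2 :=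
  variance_reduced_coarse_gradient_minibatch_general hb hbn L gF hlip ι hι θk θc
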